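/- arXiv:2602.04097 — 3 statements merged into one kernel-verified Lean document; each statement's English description precedes it below -/
import Mathlib

section
/- If a subshift X is topologically mixing, then every term X_n of its SFT cover is topologically mixing. -/
open Filter Topology MeasureTheory Set

def shiftMap (A : Type*) : (ℤ → A) → (ℤ → A) := fun x n => x (n + 1)

def occursAt {A : Type*} (x : ℤ → A) (i : ℤ) (w : List A) : Prop :=
  ∀ j : Fin w.length, x (i + (j : ℕ)) = w.get j

def inLang {A : Type*} (X : Set (ℤ → A)) (w : List A) : Prop :=
  ∃ x ∈ X, occursAt x 0 w

def sftCover {A : Type*} (X : Set (ℤ → A)) (n : ℕ) : Set (ℤ → A) :=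
  { x | ∀ (i : ℤ) (w : List A), w.length ≤ n → occursAt x i w → inLang X w }

def IsSubshift {A : Type*} [TopologicalSpace A] (X : Set (ℤ → A)) : Prop :=
  X.Nonempty ∧ IsClosed X ∧ shiftMap A '' X = X

def minPeriodPts {A : Type*} (S : Set (ℤ → A)) (p : ℕ) : Set (ℤ → A) :=
  { x ∈ S | (shiftMap A)^[p] x = x ∧ ∀ q : ℕ, 0 < q → q < p → (shiftMap A)^[q] x ≠ x }

def PeriodStable {A : Type*} (X : Set (ℤ → A)) : Prop :=
  ∀ m : ℕ, ∃ n p : ℕ, 0 < p ∧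
    minPeriodPts (sftCover X n) p = minPeriodPts (sftCover X (n + m)) p

def LanguageStable {A : Type*} (X : Set (ℤ → A)) : Prop :=
  ∀ m : ℕ, ∃ n : ℕ, sftCover X n = sftCover X (n + m)

def TopMixing {A : Type*} (X : Set (ℤ → A)) : Prop :=
  ∀ u v : List A, inLang X u → inLang X v →
    ∃ N : ℕ, ∀ n ≥ N, ∃ w : List A, w.length = n ∧ inLang X (u ++ w ++ v)

def LangTransitive {A : Type*} (X : Set (ℤ → A)) : Prop :=
  ∀ u v : List A, inLang X u → inLang X v → ∃ w : List A, inLang X (u ++ w ++ v)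

def globalSlide {A : Type*} (R : ℕ) (Φ : List A → A) : (ℤ → A) → (ℤ → A) :=
  fun x i => Φ (List.ofFn (fun j : Fin (2 * R + 1) => x (i - R + (j : ℕ))))

def wordSlide {A : Type*} (R : ℕ) (Φ : List A → A) (w : List A) : List A :=
  (List.range (w.length - 2 * R)).map (fun j => Φ ((w.drop j).take (2 * R + 1)))

noncomputable def subshiftEntropy {A : Type*} (X : Set (ℤ → A)) : ℝ :=
  Filter.limsup
    (fun n : ℕ => Real.log (Nat.card { w : List A // w.length = n ∧ inLang X w }) / n)
    Filter.atTop

def IsNNSFT {A : Type*} (X : Set (ℤ → A)) : Prop :=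
  ∃ F : Set (List A), (∀ w ∈ F, w.length ≤ 2) ∧
    X = { x | ∀ (i : ℤ) (w : List A), w ∈ F → ¬ occursAt x i w }

noncomputable def xi (s : ℕ) : ℝ :=
  30 * (s : ℝ) ^ (3 * (s ^ 2 + 1)) /
    (1 - Real.rpow (1 - 1 / (4 * (s : ℝ) ^ (2 * s ^ 2))) (1 / (s ^ 2 : ℝ)))

noncomputable def measEntropy {A : Type*} [Fintype A] [MeasurableSpace A]
    (μ : MeasureTheory.Measure (ℤ → A)) : ℝ :=
  Filter.limsup
    (fun n : ℕ =>
      (∑ w : Fin n → A,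
        Real.negMulLog ((μ { x : ℤ → A | ∀ j : Fin n, x ((j : ℕ) : ℤ) = w j }).toReal)) / n)
    Filter.atTop

/-!
A word of length at most `n` in a point glued from two points of `X_n` along `n` common
consecutive coordinates lies inside one of the two halves, so the glued point is again in `X_n`.
On words: if `|c| = n` and `u c`, `c w ∈ L(X_n)`, then `u c w ∈ L(X_n)`.
Extend `u, v ∈ L(X_n)` to `u a, b v ∈ L(X_n)` with `|a| = |b| = n`. Then `a, b ∈ L(X)`, mixing
of `X` gives `a w b ∈ L(X) ⊆ L(X_n)` for all long enough `w`, and gluing twice gives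
`u (a w b) v ∈ L(X_n)`.
-/

section SftCover

variable {A : Type*}

def window (x : ℤ → A) (i : ℤ) (L : ℕ) : List A :=
  List.ofFn fun j : Fin L => x (i + j)

@[simp] lemma length_window (x : ℤ → A) (i : ℤ) (L : ℕ) : (window x i L).length = L := by
  simp [window]

lemma occursAt_iff {x : ℤ → A} {i : ℤ} {w : List A} :
    occursAt x i w ↔ ∀ (j : ℕ) (hj : j < w.length), x (i + j) = w[j] :=
  ⟨fun h j hj => h ⟨j, hj⟩, fun h j => h j j.isLt⟩

lemma occursAt_window (x : ℤ → A) (i : ℤ) (L : ℕ) : occursAt x i (window x i L) :=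
  occursAt_iff.2 fun j hj => by simp [window]

lemma occursAt_congr {x y : ℤ → A} {i : ℤ} {w : List A}
    (h : EqOn x y (Ico i (i + w.length))) : occursAt x i w ↔ occursAt y i w := by
  simp only [occursAt_iff]
  refine forall_congr' fun j => forall_congr' fun hj => ?_
  rw [h ⟨by omega, by omega⟩]

lemma eqOn_of_occursAt {x y : ℤ → A} {i : ℤ} {w : List A} (hx : occursAt x i w)
    (hy : occursAt y i w) : EqOn x y (Ico i (i + w.length)) := by
  rintro j ⟨hij, hjw⟩
  obtain ⟨k, rfl⟩ : ∃ k : ℕ, j = i + k := ⟨(j - i).toNat, by omega⟩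
  have hk : k < w.length := by omega
  exact (occursAt_iff.1 hx k hk).trans (occursAt_iff.1 hy k hk).symm

lemma occursAt_comp_add (x : ℤ → A) (k i : ℤ) (w : List A) :
    occursAt (fun j => x (j + k)) i w ↔ occursAt x (i + k) w := by
  refine forall_congr' fun j => ?_
  rw [add_right_comm]

lemma occursAt_append {x : ℤ → A} {i : ℤ} {u v : List A} :
    occursAt x i (u ++ v) ↔ occursAt x i u ∧ occursAt x (i + u.length) v := by
  simp only [occursAt_iff, List.length_append]
  constructor
  · intro h
    refine ⟨fun j hj => ?_, fun j hj => ?_⟩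
    · rw [h j (by omega), List.getElem_append_left hj]
    · rw [add_assoc, ← Nat.cast_add, h _ (by omega), List.getElem_append_right (by omega)]
      simp
  · rintro ⟨hu, hv⟩ j hj
    by_cases hju : j < u.length
    · rw [hu j hju, List.getElem_append_left hju]
    · rw [List.getElem_append_right (by omega), ← hv _ (by omega)]
      congr 1
      omega

lemma inLang_of_occursAt {S : Set (ℤ → A)} (hS : ∀ x ∈ S, ∀ k : ℤ, (fun j => x (j + k)) ∈ S)
    {x : ℤ → A} (hx : x ∈ S) {i : ℤ} {w : List A} (hw : occursAt x i w) : inLang S w :=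
  ⟨_, hS x hx i, by rwa [occursAt_comp_add, zero_add]⟩

lemma comp_add_mem_sftCover {X : Set (ℤ → A)} {n : ℕ} {x : ℤ → A} (hx : x ∈ sftCover X n)
    (k : ℤ) : (fun j => x (j + k)) ∈ sftCover X n := fun i w hw hocc =>
  hx (i + k) w hw ((occursAt_comp_add x k i w).1 hocc)

lemma exists_glue_mem_sftCover {X : Set (ℤ → A)} {n : ℕ} {x y : ℤ → A}
    (hx : x ∈ sftCover X n) (hy : y ∈ sftCover X n) {i : ℤ} (hxy : EqOn x y (Ico i (i + n))) :
    ∃ z ∈ sftCover X n, EqOn z x (Iio (i + n)) ∧ EqOn z y (Ici i) := by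
  refine ⟨fun j => if j < i + n then x j else y j, ?_, fun j hj => if_pos hj, fun j hj => ?_⟩
  · intro k w hw hocc
    have hwn : (w.length : ℤ) ≤ n := by exact_mod_cast hw
    by_cases hleft : k + w.length ≤ i + n
    · refine hx k w hw ((occursAt_congr fun j hj => ?_).1 hocc)
      exact if_pos (by simp only [mem_Ico] at hj; omega)
    · refine hy k w hw ((occursAt_congr fun j hj => ?_).1 hocc)
      simp only [mem_Ico] at hj
      split_ifs with hji
      · exact hxy ⟨by omega, hji⟩
      · rfl
  · simp only [mem_Ici] at hj
    dsimp only
    split_ifs with hji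
    · exact hxy ⟨hj, hji⟩
    · rfl

lemma inLang_sftCover_glue {X : Set (ℤ → A)} {n : ℕ} {u c w : List A} (hc : c.length = n)
    (huc : inLang (sftCover X n) (u ++ c)) (hcw : inLang (sftCover X n) (c ++ w)) :
    inLang (sftCover X n) (u ++ c ++ w) := by
  obtain ⟨x, hx, hxuc⟩ := huc
  obtain ⟨y, hy, hycw⟩ := hcw
  rw [occursAt_append, zero_add] at hxuc
  have hy' : occursAt (fun j => y (j + -u.length)) u.length (c ++ w) := by
    rwa [occursAt_comp_add, add_neg_cancel]
  rw [occursAt_append] at hy'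
  obtain ⟨z, hz, hzx, hzy⟩ := exists_glue_mem_sftCover hx (comp_add_mem_sftCover hy _)
    (by simpa [hc] using eqOn_of_occursAt hxuc.2 hy'.1)
  refine ⟨z, hz, occursAt_append.2 ⟨(occursAt_congr (hzx.mono ?_)).2 (occursAt_append.2 ?_),
    (occursAt_congr (hzy.mono ?_)).2 ?_⟩⟩
  · intro j
    simp only [mem_Ico, mem_Iio, List.length_append, hc]
    omega
  · simpa using hxuc
  · intro j
    simp only [mem_Ico, mem_Ici, List.length_append]
    omega
  · simpa [add_assoc] using hy'.2

end SftCover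

namespace IsSubshift

variable {A : Type*} [TopologicalSpace A] {X : Set (ℤ → A)}

lemma comp_add_mem (hX : IsSubshift X) {x : ℤ → A} (hx : x ∈ X) (k : ℤ) :
    (fun j => x (j + k)) ∈ X := by
  have hshift := hX.2.2
  induction k using Int.induction_on with
  | zero => simpa using hx
  | succ k ih =>
    have hmem : shiftMap A (fun j => x (j + k)) ∈ X := hshift ▸ mem_image_of_mem _ ih
    convert hmem using 1
    funext j
    exact congrArg x (by ring)
  | pred k ih =>
    obtain ⟨z, hz, hzx⟩ : (fun j => x (j + -k)) ∈ shiftMap A '' X := hshift.symm ▸ ih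
    convert hz using 1
    funext j
    have hzj := congrFun hzx (j - 1)
    simp only [shiftMap, sub_add_cancel] at hzj
    rw [hzj]
    exact congrArg x (by ring)

lemma subset_sftCover (hX : IsSubshift X) (n : ℕ) : X ⊆ sftCover X n :=
  fun _ hx _ _ _ hocc => inLang_of_occursAt (fun _ => hX.comp_add_mem) hx hocc

end IsSubshift

theorem sftCover_mixing_general {A : Type*} [TopologicalSpace A]
    (X : Set (ℤ → A)) (hX : IsSubshift X) (hmix : TopMixing X) (n : ℕ) :
    TopMixing (sftCover X n) := by
  rintro u v ⟨x, hx, hxu⟩ ⟨y, hy, hyv⟩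
  set a := window x u.length n
  set b := window y (-n) n
  have hua : inLang (sftCover X n) (u ++ a) :=
    ⟨x, hx, occursAt_append.2 ⟨hxu, by simpa using occursAt_window x u.length n⟩⟩
  have hbv : inLang (sftCover X n) (b ++ v) :=
    inLang_of_occursAt (fun _ => comp_add_mem_sftCover) hy
      (occursAt_append.2 ⟨occursAt_window y (-n) n, by simpa [b] using hyv⟩)
  obtain ⟨N, hN⟩ := hmix a b (hx _ a (by simp [a]) (occursAt_window x u.length n))
    (hy _ b (by simp [b]) (occursAt_window y (-n) n))
  refine ⟨N + 2 * n, fun len hlen => ?_⟩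
  obtain ⟨w, hw, ζ, hζ, hζawb⟩ := hN (len - 2 * n) (by omega)
  have hawb : inLang (sftCover X n) (a ++ w ++ b) := ⟨ζ, hX.subset_sftCover n hζ, hζawb⟩
  refine ⟨a ++ w ++ b, by simp only [List.length_append, length_window, hw, a, b]; omega, ?_⟩
  have huawb := inLang_sftCover_glue (length_window ..) hua (by rwa [← List.append_assoc])
  simpa using
    inLang_sftCover_glue (u := u ++ a ++ w) (length_window ..) (by simpa using huawb) hbv

theorem sftCover_mixing {A : Type*} [Fintype A] [TopologicalSpace A] [DiscreteTopology A]
    (X : Set (ℤ → A)) (hX : IsSubshift X) (hmix : TopMixing X) (n : ℕ) :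
    TopMixing (sftCover X n) :=
  sftCover_mixing_general X hX hmix n
end

section
/- If X is period stable and Y is topologically conjugate to X, then Y is period stable. -/
open Filter Topology MeasureTheory Set

/-!
By Curtis–Hedlund–Lyndon, the conjugacies `f` and `g` agree on `X` and `Y` with sliding block
codes `F` and `G` of radii `r` and `s`. A sliding block code only reads a window of the input, so
`F` maps the `(M + 2r)`-th SFT cover of `X` into the `M`-th cover of `Y` (and `G` likewise), and
`F ∘ G` is the identity on the `(2(r + s) + 1)`-th cover of `Y`, whose points look locally like
points of `Y`. Hence `G` carries points of least period `p` of a deep cover of `Y` to points of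
least period `p` of a cover of `X`, and `F` brings them back; a depth at which the points of least
period `p` of the covers of `X` stabilise over a long enough range therefore gives one for `Y`.
-/

namespace SymbolicDynamics

open Function FullShift

section Shift

variable {A B : Type*}

theorem shiftMap_eq_shift_one : shiftMap A = shift 1 := by
  funext x n
  simp [shiftMap, add_comm]

theorem shift_natCast_succ (n : ℕ) (x : ℤ → A) :
    shift ((n + 1 : ℕ) : ℤ) x = shiftMap A (shift (n : ℤ) x) := by
  rw [shiftMap_eq_shift_one, Nat.cast_succ, shift_add]

theorem shiftMap_mem [TopologicalSpace A] {X : Set (ℤ → A)} (hX : IsSubshift X) {x : ℤ → A}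
    (hx : x ∈ X) : shiftMap A x ∈ X :=
  hX.2.2 ▸ mem_image_of_mem _ hx

theorem shift_mem [TopologicalSpace A] {X : Set (ℤ → A)} (hX : IsSubshift X) {x : ℤ → A}
    (hx : x ∈ X) (k : ℤ) : shift k x ∈ X := by
  have hstep : ∀ x ∈ X, shiftMap A x ∈ X ∧ shift (-1) x ∈ X := by
    intro x hx
    refine ⟨shiftMap_mem hX hx, ?_⟩
    obtain ⟨w, hw, rfl⟩ : x ∈ shiftMap A '' X := hX.2.2.symm ▸ hx
    rwa [shiftMap_eq_shift_one, ← shift_add, add_neg_cancel, shift_zero]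
  have hnat : ∀ n : ℕ, shift (n : ℤ) x ∈ X ∧ shift (-n : ℤ) x ∈ X := by
    intro n
    induction n with
    | zero => simpa using hx
    | succ n ih =>
      refine ⟨shift_natCast_succ n x ▸ (hstep _ ih.1).1, ?_⟩
      simpa [← shift_add, add_comm] using (hstep _ ih.2).2
  obtain ⟨n, rfl | rfl⟩ := Int.eq_nat_or_neg k
  exacts [(hnat n).1, (hnat n).2]

theorem map_shift [TopologicalSpace A] {X : Set (ℤ → A)} (hX : IsSubshift X)
    {f : (ℤ → A) → (ℤ → B)} (hcomm : ∀ x ∈ X, f (shiftMap A x) = shiftMap B (f x))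
    (k : ℤ) {x : ℤ → A} (hx : x ∈ X) : f (shift k x) = shift k (f x) := by
  have hnat : ∀ n : ℕ, ∀ x ∈ X, f (shift (n : ℤ) x) = shift (n : ℤ) (f x) := by
    intro n
    induction n with
    | zero => simp
    | succ n ih =>
      intro x hx
      rw [shift_natCast_succ, shift_natCast_succ, hcomm _ (shift_mem hX hx n), ih x hx]
  obtain ⟨n, rfl | rfl⟩ := Int.eq_nat_or_neg k
  · exact hnat n x hx
  calc f (shift (-n : ℤ) x) = shift (-n : ℤ) (shift (n : ℤ) (f (shift (-n) x))) := by
        rw [← shift_add, add_neg_cancel, shift_zero]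
    _ = shift (-n : ℤ) (f x) := by
        rw [← hnat n _ (shift_mem hX hx _), ← shift_add, neg_add_cancel, shift_zero]

end Shift

section Words

variable {A : Type*}

theorem occursAt_shift {x : ℤ → A} {k i : ℤ} {w : List A} :
    occursAt (shift k x) i w ↔ occursAt x (k + i) w := by
  simp only [occursAt, shift_apply, add_assoc]

theorem occursAt_congr {x y : ℤ → A} {i : ℤ} {w : List A}
    (hxy : EqOn x y (Ico i (i + w.length))) (hx : occursAt x i w) : occursAt y i w := by
  intro j
  rw [← hx j, hxy]
  simp

theorem inLang_of_occursAt [TopologicalSpace A] {X : Set (ℤ → A)} (hX : IsSubshift X)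
    {x : ℤ → A} (hx : x ∈ X) {i : ℤ} {w : List A} (h : occursAt x i w) : inLang X w :=
  ⟨shift i x, shift_mem hX hx i, occursAt_shift.2 (by rwa [add_zero])⟩

theorem sftCover_antitone (X : Set (ℤ → A)) : Antitone (sftCover X) :=
  fun _ _ hnm _ hx i w hw => hx i w (hw.trans hnm)

theorem exists_mem_eqOn_of_mem_sftCover [TopologicalSpace A] {X : Set (ℤ → A)}
    (hX : IsSubshift X) {N : ℕ} {x : ℤ → A} (hx : x ∈ sftCover X N) (b : ℤ) {L : ℕ}
    (hL : L ≤ N) : ∃ z ∈ X, EqOn z x (Ico b (b + L)) := by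
  have hocc : occursAt x b (List.ofFn fun k : Fin L => x (b + k)) := by
    intro j
    simp
  obtain ⟨z, hzX, hz⟩ := hx b _ (by simpa using hL) hocc
  refine ⟨shift (-b) z, shift_mem hX hzX _, fun n hn => ?_⟩
  obtain ⟨hbn, hnb⟩ := mem_Ico.1 hn
  have hk := hz ⟨(n - b).toNat, by simp; omega⟩
  simp only [List.get_eq_getElem, List.getElem_ofFn] at hk
  simp only [shift_apply, neg_add_eq_sub]
  convert hk using 2 <;> omega

end Words

section Topology

variable {A B : Type*} [TopologicalSpace A] [DiscreteTopology A]

theorem nhds_basis_eqOn_Icc (x : ℤ → A) :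
    (𝓝 x).HasBasis (fun _ : ℕ => True) fun r => {y | EqOn y x (Icc (-r : ℤ) r)} := by
  refine ⟨fun s => ⟨fun hs => ?_, fun ⟨r, _, hr⟩ => ?_⟩⟩
  · rw [nhds_pi, Filter.mem_pi] at hs
    obtain ⟨I, hI, t, ht, hts⟩ := hs
    obtain ⟨r, hr⟩ := (hI.image Int.natAbs).bddAbove
    refine ⟨r, trivial, fun y hy => hts fun i hi => ?_⟩
    have hir : i.natAbs ≤ r := hr (mem_image_of_mem _ hi)
    rw [hy (by simp only [mem_Icc]; omega)]
    exact mem_of_mem_nhds (ht i)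
  · exact Filter.mem_of_superset ((isOpen_cylinder (Finset.Icc (-r : ℤ) r) x).mem_nhds
      fun _ _ => rfl) fun y hy => hr fun i hi => hy i (Finset.mem_Icc.2 hi)

theorem exists_radius_of_continuousOn [TopologicalSpace B] [DiscreteTopology B]
    {X : Set (ℤ → A)} (hX : IsCompact X) {f : (ℤ → A) → (ℤ → B)} (hf : ContinuousOn f X) :
    ∃ r : ℕ, ∀ x ∈ X, ∀ x' ∈ X, EqOn x x' (Icc (-r : ℤ) r) → f x 0 = f x' 0 := by
  have hloc : ∀ x ∈ X, ∃ r : ℕ, ∀ y ∈ X, EqOn y x (Icc (-r : ℤ) r) → f y 0 = f x 0 := by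
    intro x hx
    have h0 : {y | f y 0 = f x 0} ∈ 𝓝[X] x :=
      ((continuous_apply 0).continuousAt.comp_continuousWithinAt (hf x hx))
        ((isOpen_discrete {f x 0}).mem_nhds rfl)
    obtain ⟨r, -, hr⟩ := (nhdsWithin_hasBasis (nhds_basis_eqOn_Icc x) X).mem_iff.1 h0
    exact ⟨r, fun y hy hyx => hr ⟨hyx, hy⟩⟩
  choose! r hr using hloc
  obtain ⟨t, htX, hcover⟩ := hX.elim_nhds_subcover _ fun x _ =>
    (nhds_basis_eqOn_Icc x).mem_of_mem (i := r x) trivial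
  refine ⟨t.sup r, fun x hx x' hx' hxx' => ?_⟩
  obtain ⟨z, hzt, hxz⟩ := mem_iUnion₂.1 (hcover hx)
  have hsub : Icc (-r z : ℤ) (r z) ⊆ Icc (-↑(t.sup r) : ℤ) ↑(t.sup r) := by
    have := Finset.le_sup (f := r) hzt
    exact Icc_subset_Icc (by omega) (by omega)
  have hx'z : EqOn x' z (Icc (-r z : ℤ) (r z)) := fun i hi => (hxx' (hsub hi)).symm.trans (hxz hi)
  rw [hr z (htX z hzt) x hx hxz, hr z (htX z hzt) x' hx' hx'z]

end Topology

section SlidingBlock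

variable {A B C : Type*}

def window (r : ℕ) (x : ℤ → A) (i : ℤ) : Fin (2 * r + 1) → A := fun j => x (i - r + j)

def slidingBlock (r : ℕ) (Φ : (Fin (2 * r + 1) → A) → B) (x : ℤ → A) : ℤ → B :=
  fun i => Φ (window r x i)

theorem window_shift (r : ℕ) (x : ℤ → A) (k i : ℤ) :
    window r (shift k x) i = window r x (k + i) := by
  funext j
  simp only [window, shift_apply]
  ring_nf

theorem window_eq_window_iff {r : ℕ} {x x' : ℤ → A} {i : ℤ} :
    window r x i = window r x' i ↔ EqOn x x' (Icc (i - r) (i + r)) := by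
  refine ⟨fun h n hn => ?_, fun h => funext fun j => h ?_⟩
  · obtain ⟨h₁, h₂⟩ := mem_Icc.1 hn
    have := congrFun h ⟨(n - (i - r)).toNat, by omega⟩
    simp only [window] at this
    convert this using 2 <;> omega
  · have := j.isLt
    simp only [mem_Icc]
    omega

theorem slidingBlock_semiconj (r : ℕ) (Φ : (Fin (2 * r + 1) → A) → B) :
    Semiconj (slidingBlock r Φ) (shiftMap A) (shiftMap B) := fun x => by
  funext i
  simp only [slidingBlock, shiftMap_eq_shift_one, window_shift, shift_apply]

theorem slidingBlock_apply_congr {r : ℕ} {Φ : (Fin (2 * r + 1) → A) → B} {x x' : ℤ → A} {i : ℤ}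
    (h : EqOn x x' (Icc (i - r) (i + r))) : slidingBlock r Φ x i = slidingBlock r Φ x' i :=
  congrArg Φ (window_eq_window_iff.2 h)

theorem slidingBlock_comp_apply_congr {r s : ℕ} {Φ : (Fin (2 * r + 1) → B) → C}
    {Ψ : (Fin (2 * s + 1) → A) → B} {x x' : ℤ → A} {i : ℤ}
    (h : EqOn x x' (Icc (i - (r + s : ℕ)) (i + (r + s : ℕ)))) :
    slidingBlock r Φ (slidingBlock s Ψ x) i = slidingBlock r Φ (slidingBlock s Ψ x') i :=
  slidingBlock_apply_congr fun j hj =>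
    slidingBlock_apply_congr (h.mono fun n hn => by simp only [mem_Icc] at *; omega)

end SlidingBlock

section Conjugacy

variable {A B : Type*}

/-- Curtis–Hedlund–Lyndon, for a map defined on a compact subshift. -/
theorem exists_slidingBlock_eqOn [TopologicalSpace A] [DiscreteTopology A] [TopologicalSpace B]
    [DiscreteTopology B] {X : Set (ℤ → A)} (hX : IsSubshift X) (hXc : IsCompact X)
    {f : (ℤ → A) → (ℤ → B)} (hfc : ContinuousOn f X)
    (hcomm : ∀ x ∈ X, f (shiftMap A x) = shiftMap B (f x)) :
    ∃ (r : ℕ) (Φ : (Fin (2 * r + 1) → A) → B), EqOn (slidingBlock r Φ) f X := by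
  obtain ⟨r, hr⟩ := exists_radius_of_continuousOn hXc hfc
  have : Nonempty (ℤ → A) := hX.1.to_subtype.map Subtype.val
  -- read `f` off any point of `X` with the given central block; by the choice of `r` it does not
  -- matter which
  let Φ w := f (Classical.epsilon fun z => z ∈ X ∧ window r z 0 = w) 0
  refine ⟨r, Φ, fun x hx => funext fun i => ?_⟩
  have hix : shift i x ∈ X := shift_mem hX hx i
  set z := Classical.epsilon fun z => z ∈ X ∧ window r z 0 = window r x i
  obtain ⟨hzX, hz⟩ : z ∈ X ∧ window r z 0 = window r x i :=
    Classical.epsilon_spec (p := fun z => z ∈ X ∧ window r z 0 = window r x i)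
      ⟨shift i x, hix, by rw [window_shift, add_zero]⟩
  rw [← add_zero i, ← window_shift, window_eq_window_iff, zero_sub, zero_add] at hz
  calc slidingBlock r Φ x i = f (shift i x) 0 := hr _ hzX _ hix hz
    _ = f x i := by rw [map_shift hX hcomm i hx, shift_apply, add_zero]

theorem mapsTo_sftCover_slidingBlock [TopologicalSpace A] [TopologicalSpace B]
    {X : Set (ℤ → A)} {Y : Set (ℤ → B)} (hX : IsSubshift X) (hY : IsSubshift Y)
    {f : (ℤ → A) → (ℤ → B)} (hf : MapsTo f X Y) {r : ℕ}
    {Φ : (Fin (2 * r + 1) → A) → B} (hΦ : EqOn (slidingBlock r Φ) f X) (M : ℕ) :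
    MapsTo (slidingBlock r Φ) (sftCover X (M + 2 * r)) (sftCover Y M) := by
  intro x hx i w hw hocc
  obtain ⟨z, hzX, hzx⟩ :=
    exists_mem_eqOn_of_mem_sftCover hX hx (i - r) (L := w.length + 2 * r) (by omega)
  refine inLang_of_occursAt hY (hf hzX) (i := i) ?_
  rw [← hΦ hzX]
  refine occursAt_congr (fun k hk => slidingBlock_apply_congr ?_) hocc
  exact hzx.symm.mono fun n hn => by simp only [mem_Icc, mem_Ico] at *; omega

theorem slidingBlock_comp_eq_self_of_mem_sftCover [TopologicalSpace B] {Y : Set (ℤ → B)}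
    (hY : IsSubshift Y) {r s : ℕ} {Φ : (Fin (2 * r + 1) → A) → B} {Ψ : (Fin (2 * s + 1) → B) → A}
    (hΦΨ : ∀ y ∈ Y, slidingBlock r Φ (slidingBlock s Ψ y) = y) {y : ℤ → B}
    (hy : y ∈ sftCover Y (2 * (r + s) + 1)) : slidingBlock r Φ (slidingBlock s Ψ y) = y := by
  funext i
  obtain ⟨z, hzY, hzy⟩ :=
    exists_mem_eqOn_of_mem_sftCover hY hy (i - (r + s : ℕ)) le_rfl
  have hzy' : EqOn y z (Icc (i - (r + s : ℕ)) (i + (r + s : ℕ))) :=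
    hzy.symm.mono fun n hn => by simp only [mem_Icc, mem_Ico] at *; omega
  rw [slidingBlock_comp_apply_congr hzy', hΦΨ z hzY]
  exact (hzy' (by simp only [mem_Icc]; omega)).symm

end Conjugacy

section PeriodStable

variable {A B : Type*}

theorem minPeriodPts_mono {S T : Set (ℤ → A)} (h : S ⊆ T) (p : ℕ) :
    minPeriodPts S p ⊆ minPeriodPts T p :=
  fun _ hx => ⟨h hx.1, hx.2⟩

theorem mem_minPeriodPts_of_semiconj {F : (ℤ → A) → (ℤ → B)} {G : (ℤ → B) → (ℤ → A)}
    (hF : Semiconj F (shiftMap A) (shiftMap B)) (hG : Semiconj G (shiftMap B) (shiftMap A))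
    {S : Set (ℤ → A)} {T : Set (ℤ → B)} {p : ℕ} {y : ℤ → B} (hy : y ∈ minPeriodPts T p)
    (hFG : F (G y) = y) (hGy : G y ∈ S) : G y ∈ minPeriodPts S p := by
  refine ⟨hGy, by rw [← hG.iterate_right, hy.2.1], fun q hq hqp hper => hy.2.2 q hq hqp ?_⟩
  rw [← hFG, ← hF.iterate_right, hper]

theorem _root_.PeriodStable.of_semiconj {X : Set (ℤ → A)} {Y : Set (ℤ → B)} {F : (ℤ → A) → (ℤ → B)}
    {G : (ℤ → B) → (ℤ → A)} (hF : Semiconj F (shiftMap A) (shiftMap B))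
    (hG : Semiconj G (shiftMap B) (shiftMap A)) {c d e : ℕ}
    (hFc : ∀ M, MapsTo F (sftCover X (M + c)) (sftCover Y M))
    (hGc : ∀ M, MapsTo G (sftCover Y (M + d)) (sftCover X M))
    (hFG : ∀ y ∈ sftCover Y e, F (G y) = y) (hX : PeriodStable X) : PeriodStable Y := by
  intro m
  obtain ⟨n, p, hp, hn⟩ := hX (m + c + d + e)
  refine ⟨n + e + d, p, hp, Subset.antisymm (fun y hy => ?_)
    (minPeriodPts_mono (sftCover_antitone Y (by omega)) p)⟩
  have hFGy : F (G y) = y := hFG y (sftCover_antitone Y (by omega) hy.1)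
  have hGy : G y ∈ minPeriodPts (sftCover X n) p :=
    mem_minPeriodPts_of_semiconj hF hG hy hFGy (sftCover_antitone X (by omega) (hGc _ hy.1))
  rw [hn] at hGy
  refine ⟨?_, hy.2⟩
  rw [← hFGy]
  exact hFc _ (sftCover_antitone X (by omega) hGy.1)

end PeriodStable

end SymbolicDynamics

open SymbolicDynamics in
theorem period_stable_conjugacy_invariant {A B : Type*} [Fintype A] [Fintype B]
    [TopologicalSpace A] [DiscreteTopology A] [TopologicalSpace B] [DiscreteTopology B]
    (X : Set (ℤ → A)) (Y : Set (ℤ → B))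
    (hX : IsSubshift X) (hY : IsSubshift Y)
    (f : (ℤ → A) → (ℤ → B)) (g : (ℤ → B) → (ℤ → A))
    (hf : Set.MapsTo f X Y) (hg : Set.MapsTo g Y X)
    (hgf : ∀ x ∈ X, g (f x) = x) (hfg : ∀ y ∈ Y, f (g y) = y)
    (hfc : ContinuousOn f X) (hgc : ContinuousOn g Y)
    (hcomm : ∀ x ∈ X, f (shiftMap A x) = shiftMap B (f x))
    (hps : PeriodStable X) :
    PeriodStable Y := by
  have hgcomm : ∀ y ∈ Y, g (shiftMap B y) = shiftMap A (g y) := fun y hy =>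
    calc g (shiftMap B y) = g (f (shiftMap A (g y))) := by rw [hcomm _ (hg hy), hfg y hy]
      _ = shiftMap A (g y) := hgf _ (shiftMap_mem hX (hg hy))
  obtain ⟨r, Φ, hΦ⟩ := exists_slidingBlock_eqOn hX hX.2.1.isCompact hfc hcomm
  obtain ⟨s, Ψ, hΨ⟩ := exists_slidingBlock_eqOn hY hY.2.1.isCompact hgc hgcomm
  have hΦΨ : ∀ y ∈ Y, slidingBlock r Φ (slidingBlock s Ψ y) = y := fun y hy => by
    rw [hΨ hy, hΦ (hg hy), hfg y hy]
  exact PeriodStable.of_semiconj (slidingBlock_semiconj r Φ) (slidingBlock_semiconj s Ψ)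
    (mapsTo_sftCover_slidingBlock hX hY hf hΦ) (mapsTo_sftCover_slidingBlock hY hX hg hΨ)
    (fun y => slidingBlock_comp_eq_self_of_mem_sftCover hY hΦΨ) hps
end

section
/- Let X be a subshift and φ an automorphism of X such that both φ and φ^{-1} have range R. Then for every n > 2R, applying φ as a sliding block code to the SFT covers gives the sandwich φ(X_{n+4R}) ⊆ X_{n+2R} ⊆ φ(X_n). -/
open Filter Topology MeasureTheory Set

lemma shift_iter_apply {A : Type*} (k : ℕ) (x : ℤ → A) (t : ℤ) :
    (shiftMap A)^[k] x t = x (t + k) := by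
  induction k generalizing x t with
  | zero => simp
  | succ k ih =>
    rw [Function.iterate_succ_apply, ih]
    simp [shiftMap]
    ring_nf

lemma shift_iter_mem {A : Type*} [TopologicalSpace A] {X : Set (ℤ → A)}
    (hX : IsSubshift X) (k : ℕ) {x : ℤ → A} (hx : x ∈ X) :
    (shiftMap A)^[k] x ∈ X := by
  induction k with
  | zero => simpa
  | succ k ih =>
    rw [Function.iterate_succ_apply']
    rw [← hX.2.2]
    exact ⟨_, ih, rfl⟩

lemma occursAt_window_s18 {A : Type*} (x : ℤ → A) (i : ℤ) (L : ℕ) :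
    occursAt x i (List.ofFn (fun j : Fin L => x (i + (j : ℕ)))) := by
  intro j
  simp [List.get_ofFn]

lemma window_length {A : Type*} (x : ℤ → A) (i : ℤ) (L : ℕ) :
    (List.ofFn (fun j : Fin L => x (i + (j : ℕ)))).length = L := by simp

lemma occurs_window_val {A : Type*} (x z : ℤ → A) (i : ℤ) (L : ℕ)
    (h : occursAt z 0 (List.ofFn (fun j : Fin L => x (i + (j : ℕ))))) :
    ∀ m' : ℕ, m' < L → z m' = x (i + m') := by
  intro m' hm'
  have := h ⟨m', by simpa using hm'⟩
  simpa [List.get_ofFn] using this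

lemma cover_contract {A : Type*} [TopologicalSpace A]
    (X : Set (ℤ → A)) (hX : IsSubshift X) (R : ℕ) (Φ : List A → A)
    (hΦ : Set.MapsTo (globalSlide R Φ) X X) (m : ℕ) {x : ℤ → A}
    (hx : x ∈ sftCover X (m + 2 * R)) :
    globalSlide R Φ x ∈ sftCover X m := by
  intro i w hw how
  set L := w.length + 2 * R with hL
  obtain ⟨z, hz, hzocc⟩ := hx (i - R) (List.ofFn (fun j : Fin L => x ((i - R) + (j : ℕ))))
    (by rw [window_length]; omega) (occursAt_window_s18 x (i - R) L)
  have hzval := occurs_window_val x z (i - R) L hzocc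
  refine ⟨(shiftMap A)^[R] (globalSlide R Φ z), shift_iter_mem hX R (hΦ hz), ?_⟩
  intro k
  rw [shift_iter_apply]
  have hk := how k
  rw [← hk]
  show globalSlide R Φ z _ = globalSlide R Φ x _
  unfold globalSlide
  congr 1
  congr 1
  funext j
  have h1 : ((0 : ℤ) + k + R) - R + j = ((k + j : ℕ) : ℤ) := by push_cast; ring
  have h2 : z ((k + j : ℕ) : ℤ) = x ((i - R) + ((k + j : ℕ) : ℤ)) :=
    hzval (k + j) (by omega)
  rw [h1, h2]
  congr 1
  push_cast
  ring

lemma comp_id_on_cover {A : Type*} [TopologicalSpace A]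
    (X : Set (ℤ → A)) (R : ℕ) (Φ Ψ : List A → A)
    (hinv₂ : ∀ x ∈ X, globalSlide R Φ (globalSlide R Ψ x) = x)
    (m : ℕ) (hm : 4 * R + 1 ≤ m) {y : ℤ → A}
    (hy : y ∈ sftCover X m) :
    globalSlide R Φ (globalSlide R Ψ y) = y := by
  funext i
  obtain ⟨z, hz, hzocc⟩ := hy (i - 2 * R)
    (List.ofFn (fun j : Fin (4 * R + 1) => y ((i - 2 * R) + (j : ℕ))))
    (by rw [window_length]; omega) (occursAt_window_s18 y (i - 2 * R) (4 * R + 1))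
  have hzval := occurs_window_val y z (i - 2 * R) (4 * R + 1) hzocc
  have hloc : globalSlide R Φ (globalSlide R Ψ y) i
      = globalSlide R Φ (globalSlide R Ψ z) ((2 * R : ℕ) : ℤ) := by
    unfold globalSlide
    congr 1
    congr 1
    funext j
    congr 1
    congr 1
    funext k
    have h2 : z ((j + k : ℕ) : ℤ) = y ((i - 2 * R) + ((j + k : ℕ) : ℤ)) :=
      hzval (j + k) (by omega)
    have h1 : ((2 * R : ℕ) : ℤ) - R + j - R + k = ((j + k : ℕ) : ℤ) := by push_cast; ring
    rw [h1, h2]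
    congr 1
    push_cast
    ring
  rw [hloc, hinv₂ z hz]
  rw [hzval (2 * R) (by omega)]
  congr 1
  push_cast
  ring

theorem automorphism_cover_sandwich {A : Type*} [Fintype A]
    [TopologicalSpace A] [DiscreteTopology A]
    (X : Set (ℤ → A)) (hX : IsSubshift X) (R : ℕ) (Φ Ψ : List A → A)
    (hΦ : Set.MapsTo (globalSlide R Φ) X X)
    (hΨ : Set.MapsTo (globalSlide R Ψ) X X)
    (hinv₁ : ∀ x ∈ X, globalSlide R Ψ (globalSlide R Φ x) = x)
    (hinv₂ : ∀ x ∈ X, globalSlide R Φ (globalSlide R Ψ x) = x)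
    (n : ℕ) (hn : 2 * R < n) :
    globalSlide R Φ '' sftCover X (n + 4 * R) ⊆ sftCover X (n + 2 * R) ∧
      sftCover X (n + 2 * R) ⊆ globalSlide R Φ '' sftCover X n := by
  constructor
  · rintro y ⟨x, hx, rfl⟩
    have hx' : x ∈ sftCover X ((n + 2 * R) + 2 * R) := by
      have h : (n + 2 * R) + 2 * R = n + 4 * R := by ring
      rwa [h]
    exact cover_contract X hX R Φ hΦ (n + 2 * R) hx'
  · intro y hy
    refine ⟨globalSlide R Ψ y, ?_, ?_⟩
    · exact cover_contract X hX R Ψ hΨ n hy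
    · exact comp_id_on_cover X R Φ Ψ hinv₂ (n + 2 * R) (by omega) hy
end
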